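/- arXiv:1903.09444 — 5 statements merged into one kernel-verified Lean document; each statement's English description precedes it below -/
import Mathlib

section
/- Every perfect 2-coloring of the infinite circulant graph Ci_∞(D_n) with distance set D_n = {±1, ±3, ..., ±(2n-1)} is periodic: there exists a positive integer t such that φ(i) = φ(i+t) for all integers i. -/
/-- Neighborhood of `i` in the infinite circulant graph `Ci_∞(D_n)`. -/
noncomputable def nbrs (n : ℕ) (i : ℤ) : Finset ℤ :=
  (Finset.Icc (i - (2*(n:ℤ) - 1)) (i + (2*(n:ℤ) - 1))).filter (fun j => Odd (j - i))

/-- `φ` is a perfect `k`-coloring of `Ci_∞(D_n)` with parameter matrix `M`. -/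
def PerfectK (n k : ℕ) (φ : ℤ → Fin k) (M : Fin k → Fin k → ℕ) : Prop :=
  ∀ i j, ((nbrs n i).filter (fun x => φ x = j)).card = M (φ i) j

/-!
Both `nbrs n (i + 2n - 1)` plus the point `i + 4n` and `nbrs n (i + 2n + 1)` plus the point `i`
are the points of `[i, i + 4n]` at even distance from `i`. Counting the neighbours of each colour
`c` on both sides, a perfect colouring satisfies
`[φ (i + 4n) = c] + M (φ (i + 2n - 1)) c = [φ i = c] + M (φ (i + 2n + 1)) c`,
so each of `φ i`, `φ (i + 4n)` is determined by the other three values. Hence the window of `4n`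
consecutive colours starting at `i` determines the windows starting at `i ± 1`. There are finitely
many windows, so two of them coincide, and then the colouring repeats with their distance as period.
-/

open Finset Function

theorem eq_of_ite_add_eq {α : Type*} [DecidableEq α] {x y : α} {a : ℕ}
    (h : (if x = y then 1 else 0) + a = (if y = y then 1 else 0) + a) : x = y := by
  by_contra hxy
  simp [hxy] at h

section Periodicity

variable {α β : Type*}

theorem Int.exists_pos_periodic_of_succ_eq_iff [Finite β] (g : ℤ → β)
    (h : ∀ i j, g (i + 1) = g (j + 1) ↔ g i = g j) : ∃ t, 0 < t ∧ Periodic g t := by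
  have shift (a b : ℤ) (hab : g a = g b) (m : ℤ) : g (a + m) = g (b + m) := by
    induction m using Int.induction_on with
    | zero => simpa using hab
    | succ m ih => simpa only [← add_assoc] using (h _ _).2 ih
    | pred m ih => exact (h _ _).1 (by simpa only [add_assoc, sub_add_cancel] using ih)
  obtain ⟨a, b, hlt, hab⟩ : ∃ a b, a < b ∧ g a = g b := by
    obtain ⟨a, b, hne, hab⟩ := Finite.exists_ne_map_eq_of_infinite g
    rcases hne.lt_or_gt with hlt | hlt
    exacts [⟨a, b, hlt, hab⟩, ⟨b, a, hlt, hab.symm⟩]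
  refine ⟨b - a, sub_pos.2 hlt, fun i => ?_⟩
  have := shift a b hab (i - a)
  rw [add_sub_cancel, add_sub_left_comm] at this
  exact this.symm

def window (f : ℤ → α) (w : ℕ) (i : ℤ) : Fin w → α := fun k => f (i + k)

theorem window_eq_window_iff {f : ℤ → α} {w : ℕ} {i j : ℤ} :
    window f w i = window f w j ↔ ∀ m : ℤ, 0 ≤ m → m < w → f (i + m) = f (j + m) := by
  refine ⟨fun h m hm₀ hm => ?_, fun h => funext fun k => h k k.val.cast_nonneg (by simp)⟩
  simpa [window, hm₀] using congrFun h ⟨m.toNat, by omega⟩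

theorem window_succ_eq_iff {f : ℤ → α} {w : ℕ}
    (hfwd : ∀ i j, window f w i = window f w j → f (i + w) = f (j + w))
    (hbwd : ∀ i j, window f w (i + 1) = window f w (j + 1) → f i = f j) (i j : ℤ) :
    window f w (i + 1) = window f w (j + 1) ↔ window f w i = window f w j := by
  constructor
  · intro h
    rw [window_eq_window_iff] at h ⊢
    intro m hm₀ hm
    rcases hm₀.eq_or_lt with rfl | hm₀
    · simpa using hbwd i j (window_eq_window_iff.2 h)
    · simpa [add_assoc] using h (m - 1) (by omega) (by omega)
  · intro h
    have hw := hfwd i j h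
    rw [window_eq_window_iff] at h ⊢
    intro m hm₀ hm
    rcases (show m + 1 < w ∨ m + 1 = w by omega) with hm | hm
    · simpa [add_assoc, add_comm 1 m] using h (m + 1) (by omega) hm
    · simpa [add_assoc, add_comm 1 m, hm] using hw

theorem Function.Periodic.of_window {f : ℤ → α} {w : ℕ} (hw : 0 < w) {t : ℤ}
    (h : Periodic (window f w) t) : Periodic f t := fun i => by
  simpa [window] using congrFun (h i) ⟨0, hw⟩

end Periodicity

section Circulant

variable {n k : ℕ} {φ : ℤ → Fin k} {M : Fin k → Fin k → ℕ}

theorem insert_nbrs_eq_insert_nbrs (n : ℕ) (i : ℤ) :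
    insert (i + 4 * n) (nbrs n (i + (2 * n - 1))) = insert i (nbrs n (i + (2 * n + 1))) := by
  ext x
  simp only [nbrs, mem_insert, mem_filter, mem_Icc, Int.odd_iff]
  omega

theorem add_four_mul_notMem_nbrs (n : ℕ) (i : ℤ) : i + 4 * n ∉ nbrs n (i + (2 * n - 1)) := by
  simp only [nbrs, mem_filter, mem_Icc]
  omega

theorem self_notMem_nbrs (n : ℕ) (i : ℤ) : i ∉ nbrs n (i + (2 * n + 1)) := by
  simp only [nbrs, mem_filter, mem_Icc]
  omega

theorem PerfectK.ite_add_eq (hφ : PerfectK n k φ M) (i : ℤ) (c : Fin k) :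
    (if φ (i + 4 * n) = c then 1 else 0) + M (φ (i + (2 * n - 1))) c
      = (if φ i = c then 1 else 0) + M (φ (i + (2 * n + 1))) c := by
  have h := congrArg (fun s => ∑ x ∈ s, if φ x = c then 1 else 0)
    (insert_nbrs_eq_insert_nbrs n i)
  rwa [sum_insert (add_four_mul_notMem_nbrs n i), sum_insert (self_notMem_nbrs n i),
    ← card_filter, ← card_filter, hφ, hφ] at h

theorem PerfectK.window_succ_eq_iff (hφ : PerfectK n k φ M) (hn : 0 < n) (i j : ℤ) :
    window φ (4 * n) (i + 1) = window φ (4 * n) (j + 1) ↔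
      window φ (4 * n) i = window φ (4 * n) j := by
  refine _root_.window_succ_eq_iff (fun i j h => ?_) (fun i j h => ?_) i j
  · have h' (m : ℤ) (hm₀ : 0 ≤ m) (hm : m < 4 * n) : φ (i + m) = φ (j + m) :=
      window_eq_window_iff.1 h m hm₀ (by exact_mod_cast hm)
    have hi := hφ.ite_add_eq i (φ (j + 4 * n))
    have h₀ : φ i = φ j := by simpa using h' 0 le_rfl (by omega)
    rw [h₀, h' (2 * n - 1) (by omega) (by omega), h' (2 * n + 1) (by omega) (by omega)] at hi
    exact_mod_cast eq_of_ite_add_eq (hi.trans (hφ.ite_add_eq j _).symm)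
  · have h' (m : ℤ) (hm₀ : 0 < m) (hm : m ≤ 4 * n) : φ (i + m) = φ (j + m) := by
      simpa [add_assoc] using window_eq_window_iff.1 h (m - 1) (by omega) (by push_cast; omega)
    have hi := hφ.ite_add_eq i (φ j)
    rw [h' (4 * n) (by omega) le_rfl, h' (2 * n - 1) (by omega) (by omega),
      h' (2 * n + 1) (by omega) (by omega)] at hi
    exact eq_of_ite_add_eq (hi.symm.trans (hφ.ite_add_eq j _))

theorem PerfectK.exists_pos_periodic (hφ : PerfectK n k φ M) (hn : 0 < n) :
    ∃ t, 0 < t ∧ Periodic φ t := by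
  obtain ⟨t, ht, hper⟩ :=
    Int.exists_pos_periodic_of_succ_eq_iff (window φ (4 * n)) (hφ.window_succ_eq_iff hn)
  exact ⟨t, ht, hper.of_window (by omega)⟩

end Circulant

/-- Every perfect 2-coloring of `Ci_∞(D_n)` is periodic. -/
theorem perfect_two_coloring_periodic (n : ℕ) (hn : 0 < n)
    (φ : ℤ → Fin 2) (M : Fin 2 → Fin 2 → ℕ) (hφ : PerfectK n 2 φ M) :
    ∃ t : ℤ, 0 < t ∧ ∀ i : ℤ, φ (i + t) = φ i :=
  hφ.exists_pos_periodic hn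
end

section
/- Let φ be a perfect 2-coloring of Ci_∞(D_n) with parameter matrix ((2n-b, b), (c, 2n-c)) where b, c > 0. Then b + c ∈ {4n, 2n, 2n+1, 2n-1}. -/
/-- `φ` is a perfect 2-coloring of `Ci_∞(D_n)` with outer degrees `(b, c)`:
every vertex of color 0 (black) has exactly `b` neighbors of color 1 (white), and
every vertex of color 1 has exactly `c` neighbors of color 0. -/
def Perfect2 (n : ℕ) (φ : ℤ → Fin 2) (b c : ℕ) : Prop :=
  (∀ i, φ i = 0 → ((nbrs n i).filter (fun j => φ j = 1)).card = b) ∧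
  (∀ i, φ i = 1 → ((nbrs n i).filter (fun j => φ j = 0)).card = c)

/-!
Moving from `i` to `i + 2` replaces the neighbor `i - (2n - 1)` by `i + 2n + 1` and keeps the
other `2n - 1` neighbors, so the number of white neighbors changes by at most one. If the colors
of `i` and `i + 2` differ, these numbers are `b` and `2n - c`, whence `|b + c - 2n| ≤ 1`.
Otherwise the coloring is `2`-periodic; all neighbors of a vertex then share one color, the one
opposite to it since `b, c > 0`, and `b = c = 2n`.
-/

theorem nbrs_eq_image (n : ℕ) (i : ℤ) :
    nbrs n i = (Finset.range (2*n)).image (fun k : ℕ => i - (2*(n:ℤ) - 1) + 2*k) := by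
  ext j
  simp only [nbrs, Finset.mem_filter, Finset.mem_Icc, Finset.mem_image, Finset.mem_range,
    Int.odd_iff]
  constructor
  · rintro ⟨⟨h1, h2⟩, h3⟩
    exact ⟨((j - i + 2*n - 1)/2).toNat, by omega, by omega⟩
  · rintro ⟨k, hk, rfl⟩
    exact ⟨⟨by omega, by omega⟩, by omega⟩

theorem card_nbrs (n : ℕ) (i : ℤ) : (nbrs n i).card = 2*n := by
  rw [nbrs_eq_image, Finset.card_image_of_injective _ (fun a b h => by omega),
    Finset.card_range]

theorem card_filter_nbrs (n : ℕ) (i : ℤ) (p : ℤ → Prop) [DecidablePred p] :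
    ((nbrs n i).filter p).card
      = ∑ k ∈ Finset.range (2*n), if p (i - (2*(n:ℤ) - 1) + 2*k) then 1 else 0 := by
  rw [Finset.card_filter, nbrs_eq_image, Finset.sum_image (fun a _ b _ h => by omega)]

theorem card_filter_nbrs_add_two (n : ℕ) (i : ℤ) (p : ℤ → Prop) [DecidablePred p] :
    ((nbrs n (i+2)).filter p).card + (if p (i - (2*(n:ℤ) - 1)) then 1 else 0)
      = ((nbrs n i).filter p).card + (if p (i + 2*(n:ℤ) + 1) then 1 else 0) := by
  set f : ℕ → ℕ := fun k => if p (i - (2*(n:ℤ) - 1) + 2*k) then 1 else 0 with hf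
  have hshift : ((nbrs n (i+2)).filter p).card = ∑ k ∈ Finset.range (2*n), f (k+1) := by
    rw [card_filter_nbrs]
    refine Finset.sum_congr rfl fun k _ => ?_
    simp only [hf]
    congr 2
    push_cast
    ring
  have hlast : i + 2*(n:ℤ) + 1 = i - (2*(n:ℤ) - 1) + 2*((2*n : ℕ) : ℤ) := by
    push_cast
    ring
  rw [hshift, card_filter_nbrs, hlast]
  simpa [f] using (Finset.sum_range_succ' f (2*n)).symm.trans (Finset.sum_range_succ f (2*n))

theorem odd_sub_of_mem_nbrs {n : ℕ} {i j : ℤ} (hj : j ∈ nbrs n i) : Odd (j - i) :=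
  (Finset.mem_filter.mp hj).2

section Periodic

variable {α : Type*} {φ : ℤ → α}

theorem eq_of_mem_nbrs_of_periodic (hφ : Function.Periodic φ 2) {n : ℕ} {i j : ℤ}
    (hj : j ∈ nbrs n i) : φ j = φ (i + 1) := by
  obtain ⟨k, hk⟩ := odd_sub_of_mem_nbrs hj
  rw [show j = i + 1 + k * 2 by omega]
  exact hφ.int_mul k (i + 1)

theorem card_filter_nbrs_eq_zero_or_of_periodic [DecidableEq α] (hφ : Function.Periodic φ 2)
    (n : ℕ) (i : ℤ) (a : α) :
    ((nbrs n i).filter (fun j => φ j = a)).card = 0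
      ∨ ((nbrs n i).filter (fun j => φ j = a)).card = 2*n := by
  by_cases ha : φ (i + 1) = a
  · right
    rw [Finset.filter_true_of_mem fun j hj => (eq_of_mem_nbrs_of_periodic hφ hj).trans ha,
      card_nbrs]
  · left
    rw [Finset.filter_false_of_mem fun j hj => (eq_of_mem_nbrs_of_periodic hφ hj).trans_ne ha,
      Finset.card_empty]

end Periodic

namespace Perfect2

variable {n b c : ℕ} {φ : ℤ → Fin 2}

theorem card_filter_eq_one_add (hφ : Perfect2 n φ b c) {i : ℤ} (hi : φ i = 1) :
    ((nbrs n i).filter (fun j => φ j = 1)).card + c = 2*n := by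
  have hnot : (nbrs n i).filter (fun j => ¬ φ j = 1) = (nbrs n i).filter (fun j => φ j = 0) :=
    Finset.filter_congr fun j _ => by omega
  rw [← hφ.2 i hi, ← hnot, Finset.card_filter_add_card_filter_not, card_nbrs]

theorem exists_eq (hφ : Perfect2 n φ b c) (hb : 0 < b) (hc : 0 < c) (a : Fin 2) :
    ∃ i, φ i = a := by
  by_contra! h
  have hempty : (nbrs n 0).filter (fun j => φ j = a) = ∅ :=
    Finset.filter_false_of_mem fun j _ => h j
  have h0 := h 0
  rcases Fin.exists_fin_two.mp ⟨a, rfl⟩ with rfl | rfl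
  · have hc0 := hφ.2 0 (by omega)
    rw [hempty, Finset.card_empty] at hc0
    omega
  · have hb0 := hφ.1 0 (by omega)
    rw [hempty, Finset.card_empty] at hb0
    omega

theorem add_mem_Icc_of_ne (hφ : Perfect2 n φ b c) {i : ℤ} (hi : φ (i + 2) ≠ φ i) :
    b + c ∈ Set.Icc (2*n - 1) (2*n + 1) := by
  have hslide := card_filter_nbrs_add_two n i (fun j => φ j = 1)
  rw [Set.mem_Icc]
  obtain ⟨h0, h2⟩ | ⟨h1, h0⟩ : (φ i = 0 ∧ φ (i + 2) = 1) ∨ (φ i = 1 ∧ φ (i + 2) = 0) := by omega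
  · have := hφ.card_filter_eq_one_add h2
    rw [hφ.1 i h0] at hslide
    split_ifs at hslide <;> omega
  · have := hφ.card_filter_eq_one_add h1
    rw [hφ.1 (i + 2) h0] at hslide
    split_ifs at hslide <;> omega

end Perfect2

theorem admissible_pair_sum_general (n b c : ℕ) (hb : 0 < b) (hc : 0 < c)
    (φ : ℤ → Fin 2) (hφ : Perfect2 n φ b c) :
    b + c = 4*n ∨ b + c = 2*n ∨ b + c = 2*n + 1 ∨ b + c = 2*n - 1 := by
  by_cases hper : Function.Periodic φ 2
  · obtain ⟨i, hi⟩ := hφ.exists_eq hb hc 0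
    obtain ⟨j, hj⟩ := hφ.exists_eq hb hc 1
    have hb' := card_filter_nbrs_eq_zero_or_of_periodic hper n i 1
    have hc' := card_filter_nbrs_eq_zero_or_of_periodic hper n j 0
    rw [hφ.1 i hi] at hb'
    rw [hφ.2 j hj] at hc'
    omega
  · obtain ⟨i, hi⟩ : ∃ i, φ (i + 2) ≠ φ i := by simpa [Function.Periodic] using hper
    have := Set.mem_Icc.mp (hφ.add_mem_Icc_of_ne hi)
    omega

/-- If `(b,c)` is admissible for `Ci_∞(D_n)` with `b, c > 0`, then
`b + c ∈ {4n, 2n, 2n+1, 2n-1}`. -/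
theorem admissible_pair_sum (n b c : ℕ) (hn : 0 < n) (hb : 0 < b) (hc : 0 < c)
    (φ : ℤ → Fin 2) (hφ : Perfect2 n φ b c) :
    b + c = 4*n ∨ b + c = 2*n ∨ b + c = 2*n + 1 ∨ b + c = 2*n - 1 :=
  admissible_pair_sum_general n b c hb hc φ hφ
end

section
/- Let φ be a perfect 2-coloring of Ci_∞(D_n) with positive outer degrees b (of black) and c (of white). For every integer i with φ(i) = φ(i+2), one has φ(i-2n+1) = φ(i+2n+1). -/
/-!
The neighbourhoods of `i` and `i + 2` in `Ci_∞(D_n)` coincide except that `i - 2n + 1` lies only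
in the first and `i + 2n + 1` only in the second. If `i` and `i + 2` have the same colour,
perfectness gives both the same number of neighbours of the other colour, so the two exceptional
vertices are either both of that colour or both not.
-/

open Finset

namespace Finset

variable {α : Type*} [DecidableEq α] {s t : Finset α} {a b : α} {p : α → Prop} [DecidablePred p]

lemma card_filter_eq_card_filter_erase_add (ha : a ∈ s) :
    #(s.filter p) = #((s.erase a).filter p) + if p a then 1 else 0 := by
  simp only [card_filter, sum_erase_add _ _ ha]

lemma iff_of_erase_eq_of_card_filter_eq (ha : a ∈ s) (hb : b ∈ t)
    (hst : s.erase a = t.erase b) (hcard : #(s.filter p) = #(t.filter p)) : p a ↔ p b := by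
  rw [card_filter_eq_card_filter_erase_add ha, card_filter_eq_card_filter_erase_add hb, hst]
    at hcard
  split_ifs at hcard with hpa hpb hpb <;> simp_all

end Finset

lemma mem_nbrs {n : ℕ} {i j : ℤ} :
    j ∈ nbrs n i ↔ i - (2 * (n : ℤ) - 1) ≤ j ∧ j ≤ i + (2 * (n : ℤ) - 1) ∧ Odd (j - i) := by
  simp [nbrs, and_assoc]

lemma sub_add_one_mem_nbrs {n : ℕ} (hn : 0 < n) (i : ℤ) : i - 2 * (n : ℤ) + 1 ∈ nbrs n i := by
  rw [mem_nbrs]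
  exact ⟨by omega, by omega, ⟨-n, by ring⟩⟩

lemma add_add_one_mem_nbrs_add_two {n : ℕ} (hn : 0 < n) (i : ℤ) :
    i + 2 * (n : ℤ) + 1 ∈ nbrs n (i + 2) := by
  rw [mem_nbrs]
  exact ⟨by omega, by omega, ⟨n - 1, by ring⟩⟩

lemma nbrs_erase_eq_nbrs_add_two_erase (n : ℕ) (i : ℤ) :
    (nbrs n i).erase (i - 2 * (n : ℤ) + 1) = (nbrs n (i + 2)).erase (i + 2 * (n : ℤ) + 1) := by
  ext j
  simp only [mem_erase, mem_nbrs, Int.odd_iff]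
  omega

lemma Perfect2.card_filter_ne_eq {n b c : ℕ} {φ : ℤ → Fin 2} (hφ : Perfect2 n φ b c) {i k : ℤ}
    (hik : φ i = φ k) :
    #((nbrs n i).filter (φ · ≠ φ i)) = #((nbrs n k).filter (φ · ≠ φ i)) := by
  have hne : ∀ u v : Fin 2, u ≠ v ↔ u = 1 - v := by decide
  rcases (by decide : ∀ v : Fin 2, v = 0 ∨ v = 1) (φ i) with h0 | h1
  · simp only [h0, hne, sub_zero]
    rw [hφ.1 i h0, hφ.1 k (hik ▸ h0)]
  · simp only [h1, hne, sub_self]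
    rw [hφ.2 i h1, hφ.2 k (hik ▸ h1)]

theorem eq_pattern_general (n b c : ℕ) (hn : 0 < n)
    (φ : ℤ → Fin 2) (hφ : Perfect2 n φ b c)
    (i : ℤ) (h : φ i = φ (i + 2)) :
    φ (i - 2*(n:ℤ) + 1) = φ (i + 2*(n:ℤ) + 1) := by
  have hiff : φ (i - 2 * n + 1) ≠ φ i ↔ φ (i + 2 * n + 1) ≠ φ i :=
    iff_of_erase_eq_of_card_filter_eq (sub_add_one_mem_nbrs hn i)
      (add_add_one_mem_nbrs_add_two hn i) (nbrs_erase_eq_nbrs_add_two_erase n i)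
      (hφ.card_filter_ne_eq h)
  exact (by decide : ∀ u v w : Fin 2, (u ≠ w ↔ v ≠ w) → u = v) _ _ _ hiff

/-- If `φ(i) = φ(i+2)` then `φ(i-2n+1) = φ(i+2n+1)`. -/
theorem eq_pattern (n b c : ℕ) (hn : 0 < n) (hb : 0 < b) (hc : 0 < c)
    (φ : ℤ → Fin 2) (hφ : Perfect2 n φ b c)
    (i : ℤ) (h : φ i = φ (i + 2)) :
    φ (i - 2*(n:ℤ) + 1) = φ (i + 2*(n:ℤ) + 1) :=
  eq_pattern_general n b c hn φ hφ i h
end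

section
/- Let φ be a perfect 2-coloring of the graph Ci_{4n+2}(D_n) (K_{2n+1,2n+1} minus the perfect matching P = {(i, i+2n+1) : i}). If φ is not the bipartite coloring by parity, then for every i, φ(i) = φ(i + 2n + 1), i.e., the endpoints of each removed matching edge receive the same color. -/
/-- The finite circulant graph `Ci_t(D_n)` with distance set
`D_n = {1, 3, …, 2n-1}`, as a simple graph on `ℤ/tℤ`. -/
def circ (t n : ℕ) : SimpleGraph (ZMod t) :=
  SimpleGraph.fromRel (fun i j => ∃ d : ℕ, Odd d ∧ d < 2*n ∧ j - i = (d : ZMod t))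

section aux
set_option linter.unusedSectionVars false
variable (n : ℕ) [NeZero (4*n+2)]

lemma cm_val_sub_mod_two (a b : ZMod (4*n+2)) :
    (a - b).val % 2 = (a.val + b.val) % 2 := by
  have h2 : (2:ℕ) ∣ 4*n+2 := ⟨2*n+1, by ring⟩
  have hb := ZMod.val_lt b
  rw [sub_eq_add_neg, ZMod.val_add, Nat.mod_mod_of_dvd _ h2, ZMod.neg_val]
  split_ifs with h
  · simp [h]
  · have hb1 : b.val ≠ 0 := fun h0 => h ((ZMod.val_eq_zero b).1 h0)
    omega

lemma cm_m_val : (2*(n : ZMod (4*n+2)) + 1).val = 2*n+1 := by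
  have h : (2*(n : ZMod (4*n+2)) + 1) = ((2*n+1 : ℕ) : ZMod (4*n+2)) := by push_cast; ring
  rw [h, ZMod.val_cast_of_lt (by omega)]

lemma cm_add_m_m (i : ZMod (4*n+2)) :
    i + (2*(n:ZMod (4*n+2))+1) + (2*(n:ZMod (4*n+2))+1) = i := by
  have h : (2*(n:ZMod (4*n+2))+1) + (2*(n:ZMod (4*n+2))+1) = ((4*n+2:ℕ) : ZMod (4*n+2)) := by
    push_cast; ring
  rw [add_assoc, h, ZMod.natCast_self, add_zero]

lemma cm_even_add_m (i : ZMod (4*n+2)) :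
    Even ((i + (2*(n:ZMod (4*n+2))+1)).val) ↔ ¬ Even i.val := by
  have h := ZMod.val_add i (2*(n:ZMod (4*n+2))+1)
  rw [cm_m_val] at h
  have h2 := Nat.mod_mod_of_dvd (i.val + (2*n+1)) (⟨2*n+1, by ring⟩ : (2:ℕ) ∣ 4*n+2)
  rw [Nat.even_iff, Nat.even_iff, h]
  omega

lemma cm_odd_sub_val (x i : ZMod (4*n+2)) :
    Odd (x - i).val ↔ (Even x.val ↔ ¬ Even i.val) := by
  rw [Nat.odd_iff, cm_val_sub_mod_two, Nat.even_iff, Nat.even_iff]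
  omega

lemma cm_adj_iff (hn : 0 < n) (i x : ZMod (4*n+2)) :
    (circ (4*n+2) n).Adj i x ↔ Odd (x - i).val ∧ (x - i).val ≠ 2*n+1 := by
  rw [circ, SimpleGraph.fromRel_adj]
  constructor
  · rintro ⟨hne, h | h⟩
    · obtain ⟨d, hd, hlt, heq⟩ := h
      have hv : (x - i).val = d := by rw [heq, ZMod.val_cast_of_lt (by omega)]
      rw [hv]; exact ⟨hd, by omega⟩
    · obtain ⟨d, hd, hlt, heq⟩ := h
      have hd1 : 1 ≤ d := hd.pos
      have hxd : x - i = -((d:ℕ) : ZMod (4*n+2)) := by rw [← heq]; ring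
      have hdval : ((d:ℕ) : ZMod (4*n+2)).val = d := ZMod.val_cast_of_lt (by omega)
      have hdne : ((d:ℕ) : ZMod (4*n+2)) ≠ 0 := by
        intro h0; rw [h0, ZMod.val_zero] at hdval; omega
      have hv : (x - i).val = 4*n+2 - d := by rw [hxd, ZMod.neg_val]; simp [hdne, hdval]
      obtain ⟨k, hk⟩ := hd
      exact ⟨by rw [hv]; exact ⟨2*n - k, by omega⟩, by omega⟩
  · rintro ⟨hodd, hne⟩
    have hne0 : i ≠ x := by
      intro h; rw [h, sub_self, ZMod.val_zero] at hodd
      exact (Nat.not_odd_iff_even.2 Even.zero) hodd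
    have hvlt := ZMod.val_lt (x - i)
    obtain ⟨k, hk⟩ := hodd
    refine ⟨hne0, ?_⟩
    by_cases hlt : (x - i).val < 2*n
    · exact Or.inl ⟨(x - i).val, ⟨k, hk⟩, hlt, by rw [ZMod.natCast_val, ZMod.cast_id]⟩
    · refine Or.inr ⟨4*n+2 - (x - i).val, ⟨2*n - k, by omega⟩, by omega, ?_⟩
      rw [Nat.cast_sub (by omega), ZMod.natCast_self, ZMod.natCast_val, ZMod.cast_id]
      ring

lemma cm_val_eq_m_iff (i x : ZMod (4*n+2)) :
    (x - i).val = 2*n+1 ↔ x = i + (2*(n:ZMod (4*n+2))+1) := by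
  constructor
  · intro h
    have h2 : x - i = (2*(n:ZMod (4*n+2))+1) := by
      have h1 : x - i = (((x - i).val : ℕ) : ZMod (4*n+2)) := by
        rw [ZMod.natCast_val, ZMod.cast_id]
      rw [h1, h]; push_cast; ring
    rw [← h2]; ring
  · intro h
    have h2 : x - i = (2*(n:ZMod (4*n+2))+1) := by rw [h]; ring
    rw [h2, cm_m_val]

open Classical in
lemma cm_key_eq (hn : 0 < n) (φ : ZMod (4*n+2) → Fin 2) (M : Fin 2 → Fin 2 → ℕ)
    (hperf : ∀ (i : ZMod (4*n + 2)) (j : Fin 2),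
      ((Finset.univ.filter (fun x => (circ (4*n + 2) n).Adj i x ∧ φ x = j)).card
        = M (φ i) j)) (i : ZMod (4*n+2)) (j : Fin 2) :
    (Finset.univ.filter (fun x => Odd (x - i).val ∧ φ x = j)).card
      = M (φ i) j + (if φ (i + (2*(n:ZMod (4*n+2))+1)) = j then 1 else 0) := by
  set m : ZMod (4*n+2) := 2*(n:ZMod (4*n+2))+1 with hm
  set S : Finset (ZMod (4*n+2)) := Finset.univ.filter (fun x => Odd (x - i).val ∧ φ x = j)
    with hS
  have hmem : (i + m) ∈ S ↔ φ (i+m) = j := by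
    simp only [hS, Finset.mem_filter, Finset.mem_univ, true_and]
    have h1 : (i + m - i) = m := by ring
    rw [h1, hm, cm_m_val]
    simp only [and_iff_right_iff_imp]
    intro _; exact ⟨n, by ring⟩
  have hErase : Finset.univ.filter (fun x => (circ (4*n+2) n).Adj i x ∧ φ x = j)
      = S.erase (i+m) := by
    ext x
    simp only [Finset.mem_erase, Finset.mem_filter, Finset.mem_univ, true_and, hS,
      cm_adj_iff n hn i x]
    constructor
    · rintro ⟨⟨ho, hv⟩, hφ⟩
      exact ⟨fun he => hv ((cm_val_eq_m_iff n i x).2 he), ho, hφ⟩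
    · rintro ⟨hne, ho, hφ⟩
      exact ⟨⟨ho, fun hv => hne ((cm_val_eq_m_iff n i x).1 hv)⟩, hφ⟩
  have hcard := hperf i j
  rw [hErase] at hcard
  by_cases h : φ (i + m) = j
  · rw [if_pos h, ← hcard, Finset.card_erase_add_one (hmem.2 h)]
  · rw [if_neg h, ← hcard, Finset.erase_eq_of_notMem (fun hc => h (hmem.1 hc)), add_zero]

open Classical in
lemma cm_Sset_even (φ : ZMod (4*n+2) → Fin 2) (i : ZMod (4*n+2)) (j : Fin 2)
    (h : Even i.val) :
    Finset.univ.filter (fun x => Odd (x - i).val ∧ φ x = j)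
      = Finset.univ.filter (fun x => ¬ Even x.val ∧ φ x = j) := by
  ext x
  simp only [Finset.mem_filter, Finset.mem_univ, true_and, cm_odd_sub_val]
  tauto

open Classical in
lemma cm_Sset_odd (φ : ZMod (4*n+2) → Fin 2) (i : ZMod (4*n+2)) (j : Fin 2)
    (h : ¬ Even i.val) :
    Finset.univ.filter (fun x => Odd (x - i).val ∧ φ x = j)
      = Finset.univ.filter (fun x => Even x.val ∧ φ x = j) := by
  ext x
  simp only [Finset.mem_filter, Finset.mem_univ, true_and, cm_odd_sub_val]
  tauto

open Classical in
lemma cm_partner (hn : 0 < n) (φ : ZMod (4*n+2) → Fin 2) (M : Fin 2 → Fin 2 → ℕ)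
    (hperf : ∀ (i : ZMod (4*n + 2)) (j : Fin 2),
      ((Finset.univ.filter (fun x => (circ (4*n + 2) n).Adj i x ∧ φ x = j)).card
        = M (φ i) j))
    (i i' : ZMod (4*n+2)) (hpar : Even i.val ↔ Even i'.val) (hc : φ i = φ i') :
    φ (i + (2*(n:ZMod (4*n+2))+1)) = φ (i' + (2*(n:ZMod (4*n+2))+1)) := by
  set m : ZMod (4*n+2) := 2*(n:ZMod (4*n+2))+1 with hm
  set j := φ (i + m) with hj
  have h1 := cm_key_eq n hn φ M hperf i j
  have h2 := cm_key_eq n hn φ M hperf i' j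
  rw [hc] at h1
  have hfe : Finset.univ.filter (fun x => Odd (x - i).val ∧ φ x = j)
      = Finset.univ.filter (fun x => Odd (x - i').val ∧ φ x = j) := by
    by_cases he : Even i.val
    · rw [cm_Sset_even n φ i j he, cm_Sset_even n φ i' j (hpar.1 he)]
    · rw [cm_Sset_odd n φ i j he, cm_Sset_odd n φ i' j (fun h => he (hpar.2 h))]
  rw [hfe, h2] at h1
  rw [if_pos hj.symm] at h1
  by_contra hne
  rw [if_neg (fun h => hne h.symm)] at h1
  omega

end aux

open Classical in
/-- For a perfect 2-coloring of `Ci_{4n+2}(D_n)` other than the bipartite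
coloring by parity, the endpoints of every removed matching edge
`(i, i + 2n+1)` get the same color. -/
theorem matching_monochrome (n : ℕ) (hn : 0 < n) [NeZero (4*n + 2)]
    (φ : ZMod (4*n + 2) → Fin 2) (M : Fin 2 → Fin 2 → ℕ)
    (hperf : ∀ (i : ZMod (4*n + 2)) (j : Fin 2),
      ((Finset.univ.filter (fun x => (circ (4*n + 2) n).Adj i x ∧ φ x = j)).card
        = M (φ i) j))
    (hnonbip : ¬ (∀ i j : ZMod (4*n + 2), Even i.val → ¬ Even j.val → φ i ≠ φ j)) :
    ∀ i : ZMod (4*n + 2), φ i = φ (i + (2*(n : ZMod (4*n+2)) + 1)) := by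
  have hNZ : NeZero (4*n+2) := ⟨by omega⟩
  set m : ZMod (4*n+2) := 2*(n:ZMod (4*n+2))+1 with hm
  have two : ∀ c d e : Fin 2, c ≠ d → c ≠ e → d = e := by decide
  by_contra hcon
  push_neg at hcon
  obtain ⟨i0, hi0⟩ := hcon
  -- every matched pair is bichromatic
  have hall : ∀ i : ZMod (4*n+2), φ (i + m) ≠ φ i := by
    intro i heq
    by_cases hp : Even i.val ↔ Even i0.val
    · by_cases hc : φ i = φ i0
      · have hP := cm_partner n hn φ M hperf i i0 hp hc
        exact hi0 (by rw [← hc, ← heq, hP])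
      · have h1 : φ i = φ (i0 + m) := two _ _ _ (Ne.symm hc) hi0
        have hP := cm_partner n hn φ M hperf (i + m) (i0 + m)
          (by rw [cm_even_add_m, cm_even_add_m]; exact not_congr hp) (heq.trans h1)
        rw [cm_add_m_m, cm_add_m_m] at hP
        exact hc hP
    · by_cases hc : φ (i + m) = φ i0
      · have hP := cm_partner n hn φ M hperf (i + m) i0
          (by rw [cm_even_add_m]; tauto) hc
        rw [cm_add_m_m] at hP
        exact hi0 ((hc.symm.trans heq).trans hP)
      · have h1 : φ (i + m) = φ (i0 + m) := two _ _ _ (Ne.symm hc) hi0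
        have hP := cm_partner n hn φ M hperf i (i0 + m)
          (by rw [cm_even_add_m]; tauto) (heq.symm.trans h1)
        rw [cm_add_m_m] at hP
        exact hc hP
  push_neg at hnonbip
  obtain ⟨u, v, hu, hv, huv⟩ := hnonbip
  set c := φ u with hcdef
  -- counts
  have h1 := cm_key_eq n hn φ M hperf u c
  have h2 := cm_key_eq n hn φ M hperf v c
  rw [cm_Sset_even n φ u c hu, if_neg (fun h => hall u (h.trans hcdef))] at h1
  rw [cm_Sset_odd n φ v c hv, ← huv, if_neg (fun h => hall v (h.trans huv))] at h2
  have hBc' : (Finset.univ.filter (fun x => ¬ Even x.val ∧ φ x = c)).card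
      = (Finset.univ.filter (fun x => Even x.val ∧ ¬ φ x = c)).card := by
    apply Finset.card_bij' (fun x _ => x + m) (fun y _ => y + m)
    · intro a ha
      simp only [Finset.mem_filter, Finset.mem_univ, true_and] at ha ⊢
      exact ⟨(cm_even_add_m n a).2 ha.1, fun h => hall a (h.trans ha.2.symm)⟩
    · intro a ha
      simp only [Finset.mem_filter, Finset.mem_univ, true_and] at ha ⊢
      exact ⟨fun h => (cm_even_add_m n a).1 h ha.1,
        (two (φ a) c (φ (a + m)) ha.2 (Ne.symm (hall a))).symm⟩
    · intro a _; exact cm_add_m_m n a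
    · intro a _; exact cm_add_m_m n a
  have hsplit : (Finset.univ.filter (fun x : ZMod (4*n+2) => Even x.val ∧ φ x = c)).card
      + (Finset.univ.filter (fun x : ZMod (4*n+2) => Even x.val ∧ ¬ φ x = c)).card
      = (Finset.univ.filter (fun x : ZMod (4*n+2) => Even x.val)).card := by
    rw [← Finset.filter_filter, ← Finset.filter_filter]
    exact Finset.card_filter_add_card_filter_not _
  have heo : (Finset.univ.filter (fun x : ZMod (4*n+2) => Even x.val)).card
      = (Finset.univ.filter (fun x : ZMod (4*n+2) => ¬ Even x.val)).card := by
    apply Finset.card_bij' (fun x _ => x + m) (fun y _ => y + m)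
    · intro a ha
      simp only [Finset.mem_filter, Finset.mem_univ, true_and] at ha ⊢
      exact fun h => (cm_even_add_m n a).1 h ha
    · intro a ha
      simp only [Finset.mem_filter, Finset.mem_univ, true_and] at ha ⊢
      exact (cm_even_add_m n a).2 ha
    · intro a _; exact cm_add_m_m n a
    · intro a _; exact cm_add_m_m n a
  have htot := Finset.card_filter_add_card_filter_not
    (s := (Finset.univ : Finset (ZMod (4*n+2)))) (fun x => Even x.val)
  rw [Finset.card_univ, ZMod.card] at htot
  rw [← hcdef] at h1
  omega
end

section
/- For every perfect 2-coloring of the infinite path graph (ℤ with i ~ i±1), the coloring is equivalent (up to shift and color swap) to one of the periodic colorings with periods [12], [122], or [1122]. -/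
/-!
On the path every vertex has two neighbours, so for a perfect 2-colouring the number of
neighbours sharing a vertex's colour depends only on that colour: call it `d c`. Knowing the
colours of a vertex and of one neighbour, `d` then forces the colour of the other neighbour, so a
perfect colouring is determined by `d` and two consecutive colours. If `d c = 2` the colouring is
constant, so for a surjective one `d` takes values in `{0, 1}`; the three possibilities
`d = (0, 0)`, `d = (0, 1)` up to swapping colours, and `d = (1, 1)` are realised by the periods
`[12]`, `[122]` and `[1122]`, whose first two colours a suitable shift and swap of `φ` matches.
-/

open Equiv

lemma nbrs_one (i : ℤ) : nbrs 1 i = {i - 1, i + 1} := by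
  ext j
  simp only [nbrs, Finset.mem_filter, Finset.mem_Icc, Finset.mem_insert, Finset.mem_singleton,
    Int.odd_iff]
  omega

def sameColorDegree {α : Type*} [DecidableEq α] (φ : ℤ → α) (i : ℤ) : ℕ :=
  (if φ (i - 1) = φ i then 1 else 0) + (if φ (i + 1) = φ i then 1 else 0)

lemma PerfectK.sameColorDegree_eq {k : ℕ} {φ : ℤ → Fin k} {M : Fin k → Fin k → ℕ}
    (h : PerfectK 1 k φ M) (i : ℤ) : sameColorDegree φ i = M (φ i) (φ i) := by
  rw [← h i (φ i), nbrs_one, Finset.filter_insert, Finset.filter_singleton, sameColorDegree]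
  have : i - 1 ∉ ({i + 1} : Finset ℤ) := Finset.mem_singleton.not.mpr (by omega)
  split_ifs <;> simp_all

lemma sameColorDegree_le_two {α : Type*} [DecidableEq α] (φ : ℤ → α) (i : ℤ) :
    sameColorDegree φ i ≤ 2 := by
  unfold sameColorDegree; split_ifs <;> simp

lemma sameColorDegree_comp_add {α β : Type*} [DecidableEq α] [DecidableEq β] {f : α → β}
    (hf : Function.Injective f) (φ : ℤ → α) (s i : ℤ) :
    sameColorDegree (fun i => f (φ (i + s))) i = sameColorDegree φ (i + s) := by
  simp only [sameColorDegree, hf.eq_iff, sub_add_eq_add_sub, add_right_comm i 1 s]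

lemma Fin.two_eq_of_eq_iff {a b c : Fin 2} (h : b = a ↔ c = a) : b = c := by
  revert a b c; decide

lemma Fin.two_eq_iff_eq_of_count_eq {a x y x' y' : Fin 2}
    (h : (if x = a then 1 else 0) + (if y = a then 1 else 0) =
      (if x' = a then 1 else 0) + (if y' = a then (1 : ℕ) else 0)) : x = x' ↔ y = y' := by
  revert a x y x' y'; decide

theorem eq_of_sameColorDegree {φ ψ : ℤ → Fin 2} {d : Fin 2 → ℕ}
    (hφ : ∀ i, sameColorDegree φ i = d (φ i)) (hψ : ∀ i, sameColorDegree ψ i = d (ψ i))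
    (h₀ : φ 0 = ψ 0) (h₁ : φ 1 = ψ 1) : φ = ψ := by
  have step : ∀ i, φ i = ψ i → (φ (i - 1) = ψ (i - 1) ↔ φ (i + 1) = ψ (i + 1)) := by
    intro i hi
    have h : sameColorDegree φ i = sameColorDegree ψ i := by rw [hφ, hψ, hi]
    simp only [sameColorDegree, ← hi] at h
    exact Fin.two_eq_iff_eq_of_count_eq h
  have agree : ∀ n : ℤ, φ n = ψ n ∧ φ (n + 1) = ψ (n + 1) := by
    intro n
    induction n using Int.induction_on with
    | zero => simpa using ⟨h₀, h₁⟩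
    | succ n ih => exact ⟨ih.2, (step _ ih.2).1 (by simpa using ih.1)⟩
    | pred n ih => rw [sub_add_cancel]; exact ⟨(step _ ih.1).2 ih.2, ih.1⟩
  exact funext fun n => (agree n).1

theorem swap_apply_add_eq_of_sameColorDegree {φ P : ℤ → Fin 2} {d e : Fin 2 → ℕ}
    (hφ : ∀ i, sameColorDegree φ i = d (φ i)) (hP : ∀ i, sameColorDegree P i = e (P i))
    (s : ℤ) (hde : ∀ c, d c = e (swap (φ s) (P 0) c)) (h₁ : φ (s + 1) = φ s ↔ P 1 = P 0) :
    ∀ i, swap (φ s) (P 0) (φ (i + s)) = P i := by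
  refine congrFun (eq_of_sameColorDegree (d := e) (fun i => ?_) hP (by simp) ?_)
  · rw [sameColorDegree_comp_add (swap _ _).injective, hφ, hde]
  · refine Fin.two_eq_of_eq_iff (a := P 0) ?_
    rw [swap_apply_eq_iff, swap_apply_right, add_comm, h₁]

lemma sameColorDegree_period_two (i : ℤ) :
    sameColorDegree (fun i : ℤ => if i % 2 = 0 then (0 : Fin 2) else 1) i = 0 := by
  simp only [sameColorDegree]
  split_ifs <;>
    simp only [Fin.isValue, zero_ne_one, one_ne_zero, not_true, not_false_eq_true] at * <;> omega

lemma sameColorDegree_period_three (i : ℤ) :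
    sameColorDegree (fun i : ℤ => if i % 3 = 0 then (0 : Fin 2) else 1) i =
      if (if i % 3 = 0 then (0 : Fin 2) else 1) = 0 then 0 else 1 := by
  simp only [sameColorDegree]
  split_ifs <;>
    simp only [Fin.isValue, zero_ne_one, one_ne_zero, not_true, not_false_eq_true] at * <;> omega

lemma sameColorDegree_period_four (i : ℤ) :
    sameColorDegree (fun i : ℤ => if i % 4 = 0 ∨ i % 4 = 1 then (0 : Fin 2) else 1) i = 1 := by
  simp only [sameColorDegree]
  split_ifs <;>
    simp only [Fin.isValue, zero_ne_one, one_ne_zero, not_true, not_false_eq_true] at * <;> omega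

lemma eq_const_of_sameColorDegree_eq_two {φ : ℤ → Fin 2} {d : Fin 2 → ℕ}
    (hφ : ∀ i, sameColorDegree φ i = d (φ i)) {t : ℤ} (ht : d (φ t) = 2) (i : ℤ) :
    φ i = φ t := by
  have hnext : φ (t + 1) = φ t := by
    have := hφ t; rw [ht, sameColorDegree] at this; split_ifs at this <;> simp_all
  have := swap_apply_add_eq_of_sameColorDegree (P := fun _ => φ t) (e := d) hφ
    (fun i => by simp [sameColorDegree, ht]) t (by simp) (by simp [hnext]) (i - t)
  simpa using this

lemma le_one_of_sameColorDegree_eq {φ : ℤ → Fin 2} (hsurj : Function.Surjective φ)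
    {d : Fin 2 → ℕ} (hφ : ∀ i, sameColorDegree φ i = d (φ i)) (c : Fin 2) : d c ≤ 1 := by
  obtain ⟨t, rfl⟩ := hsurj c
  obtain ⟨u, hu⟩ := hsurj (φ t + 1)
  have hne : d (φ t) ≠ 2 := fun h => by
    simp [eq_const_of_sameColorDegree_eq_two hφ h u] at hu
  have := hφ t ▸ sameColorDegree_le_two φ t
  omega

lemma ne_of_sameColorDegree_eq_zero {α : Type*} [DecidableEq α] {φ : ℤ → α} {i : ℤ}
    (h : sameColorDegree φ i = 0) : φ (i + 1) ≠ φ i := by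
  unfold sameColorDegree at h; split_ifs at h <;> simp_all

lemma exists_eq_succ_of_sameColorDegree_pos {α : Type*} [DecidableEq α] {φ : ℤ → α} {i : ℤ}
    (h : 0 < sameColorDegree φ i) : ∃ s, φ (s + 1) = φ s := by
  by_cases h₂ : φ (i + 1) = φ i
  · exact ⟨i, h₂⟩
  · have h₁ : φ (i - 1) = φ i := by
      by_contra h₁; simp [sameColorDegree, h₁, h₂] at h
    exact ⟨i - 1, by rw [sub_add_cancel, h₁]⟩

lemma exists_swap_comp_add_eq_period_two {φ : ℤ → Fin 2}
    (hφ : ∀ i, sameColorDegree φ i = 0) :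
    ∃ (s : ℤ) (σ : Fin 2 ≃ Fin 2), ∀ i, σ (φ (i + s)) = if i % 2 = 0 then 0 else 1 :=
  ⟨0, _, swap_apply_add_eq_of_sameColorDegree (d := fun _ => 0) (e := fun _ => 0) hφ
    sameColorDegree_period_two 0 (fun _ => rfl)
    (iff_of_false (ne_of_sameColorDegree_eq_zero (hφ 0)) (by decide))⟩

lemma exists_swap_comp_add_eq_period_three {φ : ℤ → Fin 2} {t : ℤ}
    (hφ : ∀ i, sameColorDegree φ i = if φ i = φ t then 0 else 1) :
    ∃ (s : ℤ) (σ : Fin 2 ≃ Fin 2), ∀ i, σ (φ (i + s)) = if i % 3 = 0 then 0 else 1 := by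
  refine ⟨t, _, swap_apply_add_eq_of_sameColorDegree (d := fun a => if a = φ t then 0 else 1)
    (e := fun a => if a = 0 then 0 else 1) hφ sameColorDegree_period_three t (fun c => ?_)
    (iff_of_false (ne_of_sameColorDegree_eq_zero (by simp [hφ t])) (by decide))⟩
  simp [swap_apply_eq_iff]

lemma exists_swap_comp_add_eq_period_four {φ : ℤ → Fin 2}
    (hφ : ∀ i, sameColorDegree φ i = 1) :
    ∃ (s : ℤ) (σ : Fin 2 ≃ Fin 2),
      ∀ i, σ (φ (i + s)) = if i % 4 = 0 ∨ i % 4 = 1 then 0 else 1 := by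
  obtain ⟨s, hs⟩ := exists_eq_succ_of_sameColorDegree_pos (i := 0) (by rw [hφ]; exact one_pos)
  exact ⟨s, _, swap_apply_add_eq_of_sameColorDegree (d := fun _ => 1) (e := fun _ => 1) hφ
    sameColorDegree_period_four s (fun _ => rfl) (iff_of_true hs (by decide))⟩

lemma Fin.two_fun_eq_of_le_one {d : Fin 2 → ℕ} (hd : ∀ c, d c ≤ 1) :
    d = (fun _ => 0) ∨ d = (fun _ => 1) ∨ ∃ c, d = fun a => if a = c then 0 else 1 := by
  rcases Nat.le_one_iff_eq_zero_or_eq_one.mp (hd 0) with h₀ | h₀ <;>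
    rcases Nat.le_one_iff_eq_zero_or_eq_one.mp (hd 1) with h₁ | h₁
  · exact Or.inl (funext fun a => by fin_cases a <;> assumption)
  · exact Or.inr (Or.inr ⟨0, funext fun a => by fin_cases a <;> simp [h₀, h₁]⟩)
  · exact Or.inr (Or.inr ⟨1, funext fun a => by fin_cases a <;> simp [h₀, h₁]⟩)
  · exact Or.inr (Or.inl (funext fun a => by fin_cases a <;> assumption))

/-- Every perfect 2-coloring of the infinite path graph `Ci_∞({1})` is,
up to a shift and a swap of colors, one of the periodic colorings with
periods `[12]`, `[122]`, `[1122]`. -/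
theorem path_perfect_two_colorings (φ : ℤ → Fin 2) (hsurj : Function.Surjective φ)
    (M : Fin 2 → Fin 2 → ℕ) (hφ : PerfectK 1 2 φ M) :
    ∃ (s : ℤ) (σ : Fin 2 ≃ Fin 2),
      (∀ i : ℤ, σ (φ (i + s)) = if i % 2 = 0 then 0 else 1) ∨
      (∀ i : ℤ, σ (φ (i + s)) = if i % 3 = 0 then 0 else 1) ∨
      (∀ i : ℤ, σ (φ (i + s)) = if i % 4 = 0 ∨ i % 4 = 1 then 0 else 1) := by
  obtain ⟨d, hd⟩ : ∃ d : Fin 2 → ℕ, ∀ i, sameColorDegree φ i = d (φ i) :=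
    ⟨fun c => M c c, hφ.sameColorDegree_eq⟩
  rcases Fin.two_fun_eq_of_le_one (le_one_of_sameColorDegree_eq hsurj hd) with rfl | rfl | ⟨c, rfl⟩
  · obtain ⟨s, σ, h⟩ := exists_swap_comp_add_eq_period_two hd
    exact ⟨s, σ, Or.inl h⟩
  · obtain ⟨s, σ, h⟩ := exists_swap_comp_add_eq_period_four hd
    exact ⟨s, σ, Or.inr (Or.inr h)⟩
  · obtain ⟨t, rfl⟩ := hsurj c
    obtain ⟨s, σ, h⟩ := exists_swap_comp_add_eq_period_three hd
    exact ⟨s, σ, Or.inr (Or.inl h)⟩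
end
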